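/- Let α = Nσ² and m = (α + √(α² + 4))/(4σ²). Then u(x) = exp(m(|x|² + 1)) is a C² solution of -Δu(x) + (1/σ⁴)|x|²u(x) = -(2α/σ²) u(x) ln u(x) on ℝ^N. -/

import Mathlib

/-! The Gaussian `u = exp (m (‖x‖² + 1))` has `Δu = (4m²‖x‖² + 2mN) u` and `u log u = m (‖x‖² + 1) u`,
so the equation reduces to matching the coefficients of `‖x‖² u` and of `u`. The constant terms
agree because `α = Nσ²`, and the `‖x‖²` terms agree because `m` is the positive root of
`4σ⁴m² - 2ασ²m - 1 = 0`. -/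

noncomputable def laplacian {N : ℕ} (f : EuclideanSpace ℝ (Fin N) → ℝ)
    (x : EuclideanSpace ℝ (Fin N)) : ℝ :=
  ∑ i : Fin N, fderiv ℝ (fun y => fderiv ℝ f y (EuclideanSpace.single i 1)) x
      (EuclideanSpace.single i 1)

open Real

theorem hasFDerivAt_exp_mul_norm_sq_add {E : Type*} [NormedAddCommGroup E]
    [InnerProductSpace ℝ E] (m c : ℝ) (x : E) :
    HasFDerivAt (fun y : E => exp (m * (‖y‖ ^ 2 + c)))
      ((2 * m * exp (m * (‖x‖ ^ 2 + c))) • innerSL ℝ x) x := by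
  convert ((((hasStrictFDerivAt_norm_sq x).hasFDerivAt.add_const c).const_mul m).exp) using 1
  ext y
  simp only [smul_apply, coe_innerSL_apply, smul_eq_mul, two_smul, smul_add, add_apply]
  ring

theorem fderiv_exp_mul_norm_sq_add_single {ι : Type*} [Fintype ι] [DecidableEq ι]
    (m c : ℝ) (i : ι) :
    (fun y => fderiv ℝ (fun y : EuclideanSpace ℝ ι => exp (m * (‖y‖ ^ 2 + c))) y
        (EuclideanSpace.single i 1)) =
      fun y => 2 * m * exp (m * (‖y‖ ^ 2 + c)) * y i := by
  ext y
  simp [(hasFDerivAt_exp_mul_norm_sq_add m c y).fderiv, EuclideanSpace.inner_single_right]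

theorem laplacian_exp_mul_norm_sq_add {N : ℕ} (m c : ℝ) (x : EuclideanSpace ℝ (Fin N)) :
    laplacian (fun y => exp (m * (‖y‖ ^ 2 + c))) x =
      (4 * m ^ 2 * ‖x‖ ^ 2 + 2 * m * N) * exp (m * (‖x‖ ^ 2 + c)) := by
  have second_partial (i : Fin N) :
      fderiv ℝ (fun y => 2 * m * exp (m * (‖y‖ ^ 2 + c)) * y i) x (EuclideanSpace.single i 1) =
        (4 * m ^ 2 * x i ^ 2 + 2 * m) * exp (m * (‖x‖ ^ 2 + c)) := by
    have h : HasFDerivAt (fun y => 2 * m * exp (m * (‖y‖ ^ 2 + c)) * y i) _ x :=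
      ((hasFDerivAt_exp_mul_norm_sq_add m c x).const_mul (2 * m)).mul
        (EuclideanSpace.proj i : EuclideanSpace ℝ (Fin N) →L[ℝ] ℝ).hasFDerivAt
    simp only [h.fderiv, add_apply, smul_apply, PiLp.proj_apply, PiLp.single_eq_same, smul_eq_mul,
      mul_one, coe_innerSL_apply, EuclideanSpace.inner_single_right, ringHom_apply, one_mul]
    ring
  simp_rw [laplacian, fderiv_exp_mul_norm_sq_add_single, second_partial, ← Finset.sum_mul,
    Finset.sum_add_distrib, ← Finset.mul_sum, ← EuclideanSpace.real_norm_sq_eq]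
  rw [Finset.sum_const, Finset.card_univ, Fintype.card_fin, nsmul_eq_mul]
  ring

theorem sq_mul_eq_of_eq_add_sqrt_div {s α m : ℝ} (hs : s ≠ 0)
    (hm : m = (α + √(α ^ 2 + 4)) / (4 * s)) :
    4 * s ^ 2 * m ^ 2 = 2 * α * s * m + 1 := by
  have hsqrt : √(α ^ 2 + 4) = 4 * s * m - α := by
    rw [hm]; field_simp; ring
  have := Real.sq_sqrt (show 0 ≤ α ^ 2 + 4 by positivity)
  rw [hsqrt] at this
  linear_combination this / 4

theorem stmt5_general (N : ℕ) (σ α m : ℝ) (hσ : 0 < σ)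
    (hα : α = N * σ ^ 2)
    (hm : m = (α + Real.sqrt (α ^ 2 + 4)) / (4 * σ ^ 2))
    (u : EuclideanSpace ℝ (Fin N) → ℝ)
    (hu : ∀ x, u x = Real.exp (m * (‖x‖ ^ 2 + 1))) :
    ContDiff ℝ 2 u ∧
      ∀ x, -laplacian u x + (1 / σ ^ 4) * ‖x‖ ^ 2 * u x
          = -(2 * α / σ ^ 2) * u x * Real.log (u x) := by
  obtain rfl : u = fun x => exp (m * (‖x‖ ^ 2 + 1)) := funext hu
  have hσ2 : σ ^ 2 ≠ 0 := by positivity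
  have hm_root := sq_mul_eq_of_eq_add_sqrt_div hσ2 hm
  have inv_sigma_four : 1 / σ ^ 4 = 4 * m ^ 2 - 2 * N * m := by
    rw [div_eq_iff (by positivity)]
    linear_combination -hm_root - 2 * m * σ ^ 2 * hα
  have coeff : 2 * α / σ ^ 2 = 2 * N := by
    rw [hα]; field_simp
  refine ⟨contDiff_exp.comp (contDiff_const.mul ((contDiff_norm_sq ℝ).add contDiff_const)),
    fun x => ?_⟩
  rw [laplacian_exp_mul_norm_sq_add, log_exp, inv_sigma_four, coeff]
  ring

theorem stmt5 (N : ℕ) (hN : 1 ≤ N) (σ α m : ℝ) (hσ : 0 < σ)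
    (hα : α = N * σ ^ 2)
    (hm : m = (α + Real.sqrt (α ^ 2 + 4)) / (4 * σ ^ 2))
    (u : EuclideanSpace ℝ (Fin N) → ℝ)
    (hu : ∀ x, u x = Real.exp (m * (‖x‖ ^ 2 + 1))) :
    ContDiff ℝ 2 u ∧
      ∀ x, -laplacian u x + (1 / σ ^ 4) * ‖x‖ ^ 2 * u x
          = -(2 * α / σ ^ 2) * u x * Real.log (u x) :=
  stmt5_general N σ α m hσ hα hm u hu
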